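/- arXiv:2407.05496 — 6 statements merged into one kernel-verified Lean document; each statement's English description precedes it below -/
import Mathlib

section
/- If f and g are functions in the class W that are nonnegative on [0,∞), then the pointwise product f·g is also in the class W. -/
/-- A function `f : ℝ → ℝ` belongs to the class `W` if
`f x - f y ≥ f (x - y)` for all reals `x ≥ y ≥ 0`. -/
def MemW (f : ℝ → ℝ) : Prop :=
  ∀ x y : ℝ, 0 ≤ y → y ≤ x → f x - f y ≥ f (x - y)

/-- If `f, g ∈ W` are nonnegative on `[0,∞)`, then `f · g ∈ W`. -/
theorem stmt_4 (f g : ℝ → ℝ) (hf : MemW f) (hg : MemW g)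
    (hf0 : ∀ x : ℝ, 0 ≤ x → 0 ≤ f x) (hg0 : ∀ x : ℝ, 0 ≤ x → 0 ≤ g x) :
    MemW (fun x => f x * g x) := by
  intro x y hy hxy
  have hd : (0:ℝ) ≤ x - y := by linarith
  have h1 := hf x y hy hxy
  have h2 := hg x y hy hxy
  have hfy := hf0 y hy
  have hgy := hg0 y hy
  have hfd := hf0 _ hd
  have hgd := hg0 _ hd
  simp only [ge_iff_le] at *
  nlinarith [mul_le_mul (by linarith : f y + f (x-y) ≤ f x) (by linarith : g y + g (x-y) ≤ g x) (by linarith) (by linarith : (0:ℝ) ≤ f x)]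
end

section
/- Let f and g belong to the class W, and suppose both f and g are nonnegative on [0,∞) and g maps [0,∞) into [0,∞). Then the composition f ∘ g belongs to the class W; that is, f(g(x)) - f(g(y)) ≥ f(g(x - y)) for all x ≥ y ≥ 0. -/
/-- If `f, g ∈ W` are nonnegative on `[0,∞)` (in particular `g` maps
`[0,∞)` into `[0,∞)`), then `f ∘ g ∈ W`:
`f (g x) - f (g y) ≥ f (g (x - y))` for all `x ≥ y ≥ 0`. -/
theorem stmt_12 (f g : ℝ → ℝ) (hf : MemW f) (hg : MemW g)
    (hf0 : ∀ x : ℝ, 0 ≤ x → 0 ≤ f x) (hg0 : ∀ x : ℝ, 0 ≤ x → 0 ≤ g x) :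
    ∀ x y : ℝ, 0 ≤ y → y ≤ x → f (g x) - f (g y) ≥ f (g (x - y)) := by
  -- f is monotone on [0,∞)
  have fmono : ∀ a b : ℝ, 0 ≤ b → b ≤ a → f b ≤ f a := by
    intro a b hb hba
    have h := hf a b hb hba
    have h2 := hf0 (a - b) (by linarith)
    linarith
  intro x y hy hxy
  have hgy : 0 ≤ g y := hg0 y hy
  have hgxy : 0 ≤ g (x - y) := hg0 _ (by linarith)
  have hgcomp := hg x y hy hxy
  have hgyx : g y ≤ g x := by linarith
  have h1 := hf (g x) (g y) hgy hgyx
  have h2 : f (g (x - y)) ≤ f (g x - g y) := fmono _ _ hgxy (by linarith)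
  linarith
end

section
/- (Szegő's inequality) Let m ≥ 1 be a natural number, let a_1 ≥ a_2 ≥ ... ≥ a_{2m-1} ≥ 0 be real numbers, and let f : ℝ → ℝ be convex on the interval [0, a_1]. Then ∑_{j=1}^{2m-1} (-1)^{j-1} f(a_j) ≥ f( ∑_{j=1}^{2m-1} (-1)^{j-1} a_j ). -/
/-!
Peel off the two largest terms. Writing `s` for the alternating sum of `a 2, …, a (2m-2)`,
one has `0 ≤ s ≤ a 2 ≤ a 1 ≤ a 0`, and convexity applied to `s ≤ a 1 ≤ a 0` gives
`f (a 1) + f (a 0 - a 1 + s) ≤ f (a 0) + f s`; the induction hypothesis bounds `f s`.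
-/

open Finset

lemma ConvexOn.map_add_map_sub_add_le {s : Set ℝ} {f : ℝ → ℝ} (hf : ConvexOn ℝ s f)
    {x y z : ℝ} (hx : x ∈ s) (hz : z ∈ s) (hzy : z ≤ y) (hyx : y ≤ x) :
    f y + f (x - y + z) ≤ f x + f z := by
  obtain rfl | hzx := (hzy.trans hyx).eq_or_lt
  · obtain rfl : y = z := le_antisymm hyx hzy
    simp
  have hxz : x - z ≠ 0 := sub_ne_zero.mpr hzx.ne'
  set t := (y - z) / (x - z)
  have ht : t * (x - z) = y - z := div_mul_cancel₀ _ hxz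
  have ht0 : 0 ≤ t := div_nonneg (by linarith) (by linarith)
  have ht1 : t ≤ 1 := (div_le_one (by linarith)).mpr (by linarith)
  -- `y` and `x - y + z` are the convex combinations of `x, z` with swapped weights `t, 1 - t`.
  have hy := hf.2 hx hz ht0 (sub_nonneg.mpr ht1) (add_sub_cancel t 1)
  have hw := hf.2 hx hz (sub_nonneg.mpr ht1) ht0 (sub_add_cancel 1 t)
  simp only [smul_eq_mul] at hy hw
  rw [show t * x + (1 - t) * z = y by linarith] at hy
  rw [show (1 - t) * x + t * z = x - y + z by linarith] at hw
  linarith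

lemma sum_range_succ_succ_neg_one_pow_mul {R : Type*} [Ring R] (k : ℕ) (g : ℕ → R) :
    ∑ j ∈ range (k + 2), (-1 : R) ^ j * g j =
      g 0 - g 1 + ∑ j ∈ range k, (-1 : R) ^ j * g (j + 2) := by
  simp only [sum_range_succ', pow_succ, mul_neg, mul_one, neg_mul, neg_neg, pow_zero, one_mul,
    zero_add]
  abel

section Alternating

variable {a : ℕ → ℝ} {n : ℕ}

lemma alternating_sum_mem_Icc (hmono : ∀ i < 2 * n, a (i + 1) ≤ a i) (hlast : 0 ≤ a (2 * n)) :
    ∑ j ∈ range (2 * n + 1), (-1 : ℝ) ^ j * a j ∈ Set.Icc 0 (a 0) := by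
  induction n generalizing a with
  | zero => simpa using hlast
  | succ n ih =>
    have h01 := hmono 0 (by omega)
    have h12 := hmono 1 (by omega)
    obtain ⟨hs0, hs2⟩ := ih (a := fun i => a (i + 2)) (fun i hi => hmono (i + 2) (by omega))
      (by simpa [mul_add] using hlast)
    rw [show 2 * (n + 1) + 1 = 2 * n + 1 + 2 by ring, sum_range_succ_succ_neg_one_pow_mul]
    constructor <;> linarith

lemma ConvexOn.map_alternating_sum_le {f : ℝ → ℝ} (hmono : ∀ i < 2 * n, a (i + 1) ≤ a i)
    (hlast : 0 ≤ a (2 * n)) (hf : ConvexOn ℝ (Set.Icc 0 (a 0)) f) :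
    f (∑ j ∈ range (2 * n + 1), (-1 : ℝ) ^ j * a j) ≤
      ∑ j ∈ range (2 * n + 1), (-1 : ℝ) ^ j * f (a j) := by
  induction n generalizing a with
  | zero => simp
  | succ n ih =>
    have h01 := hmono 0 (by omega)
    have h12 := hmono 1 (by omega)
    have hmono' : ∀ i < 2 * n, a (i + 2 + 1) ≤ a (i + 2) := fun i hi => hmono (i + 2) (by omega)
    have hlast' : 0 ≤ a (2 * n + 2) := by simpa [mul_add] using hlast
    obtain ⟨hs0, hs2⟩ := alternating_sum_mem_Icc (a := fun i => a (i + 2)) hmono' hlast'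
    have h02 : a 2 ≤ a 0 := h12.trans h01
    have hf' : ConvexOn ℝ (Set.Icc 0 (a 2)) f :=
      hf.subset (Set.Icc_subset_Icc le_rfl h02) (convex_Icc _ _)
    have hpeel := hf.map_add_map_sub_add_le ⟨hs0.trans (hs2.trans h02), le_rfl⟩
      ⟨hs0, hs2.trans h02⟩ (hs2.trans h12) h01
    have hrest := ih (a := fun i => a (i + 2)) hmono' hlast' hf'
    rw [show 2 * (n + 1) + 1 = 2 * n + 1 + 2 by ring, sum_range_succ_succ_neg_one_pow_mul,
      sum_range_succ_succ_neg_one_pow_mul]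
    linarith

end Alternating

/-- Szegő's inequality: Let `m ≥ 1`, let `a 0 ≥ a 1 ≥ ⋯ ≥ a (2m-2) ≥ 0`
(the terms `a_1 ≥ ⋯ ≥ a_{2m-1} ≥ 0`, indexed from `0`), and let `f : ℝ → ℝ` be convex
on `[0, a 0]`. Then `∑_{j=0}^{2m-2} (-1)^j f (a j) ≥ f (∑_{j=0}^{2m-2} (-1)^j a j)`. -/
theorem stmt_13 (m : ℕ) (hm : 1 ≤ m) (a : ℕ → ℝ) (f : ℝ → ℝ)
    (hmono : ∀ i, i + 1 < 2 * m - 1 → a (i + 1) ≤ a i)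
    (hlast : 0 ≤ a (2 * m - 2))
    (hf : ConvexOn ℝ (Set.Icc 0 (a 0)) f) :
    ∑ j ∈ Finset.range (2 * m - 1), (-1 : ℝ) ^ j * f (a j) ≥
      f (∑ j ∈ Finset.range (2 * m - 1), (-1 : ℝ) ^ j * a j) := by
  obtain ⟨n, rfl⟩ := Nat.exists_eq_add_of_le' hm
  have hlen : 2 * (n + 1) - 1 = 2 * n + 1 := by omega
  rw [hlen]
  exact hf.map_alternating_sum_le (fun i hi => hmono i (by omega))
    (by simpa [show 2 * (n + 1) - 2 = 2 * n by omega] using hlast)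
end

section
/- Let a_1 ≥ a_2 ≥ a_3 ≥ 0 be real numbers and let f : ℝ → ℝ be convex on [0, a_1]. Then f(a_1 - a_2 + a_3) ≤ f(a_1) - f(a_2) + f(a_3). -/
/-!
Write `a₂` as a convex combination `t • a₃ + u • a₁`; since the four points satisfy
`a₂ + (a₁ - a₂ + a₃) = a₃ + a₁`, the point `a₁ - a₂ + a₃` is the mirror combination
`u • a₃ + t • a₁`. Adding the two convexity inequalities gives the claim.
-/

section

variable {𝕜 β : Type*} [Field 𝕜] [LinearOrder 𝕜] [IsStrictOrderedRing 𝕜]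
  [AddCommGroup β] [PartialOrder β] [IsOrderedAddMonoid β] [Module 𝕜 β]

theorem ConvexOn.add_le_add_of_add_eq {s : Set 𝕜} {f : 𝕜 → β} (hf : ConvexOn 𝕜 s f)
    {a b c d : 𝕜} (ha : a ∈ s) (hd : d ∈ s) (hab : a ≤ b) (hbd : b ≤ d)
    (habcd : b + c = a + d) : f b + f c ≤ f a + f d := by
  obtain ⟨t, u, ht, hu, htu, rfl⟩ : b ∈ segment 𝕜 a d := by
    rw [segment_eq_Icc (hab.trans hbd)]
    exact ⟨hab, hbd⟩
  have hc : c = u • a + t • d := by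
    simp only [smul_eq_mul] at habcd ⊢
    linear_combination habcd - (a + d) * htu
  calc f (t • a + u • d) + f c
      ≤ (t • f a + u • f d) + (u • f a + t • f d) :=
        add_le_add (hf.2 ha hd ht hu htu) (hc ▸ hf.2 ha hd hu ht (by rwa [add_comm]))
    _ = (t + u) • f a + (t + u) • f d := by simp only [add_smul]; abel
    _ = f a + f d := by rw [htu, one_smul, one_smul]

end

/-- Let `a₁ ≥ a₂ ≥ a₃ ≥ 0` and let `f : ℝ → ℝ` be convex on `[0, a₁]`.
Then `f (a₁ - a₂ + a₃) ≤ f a₁ - f a₂ + f a₃`. -/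
theorem stmt_14 (a₁ a₂ a₃ : ℝ) (h₁₂ : a₂ ≤ a₁) (h₂₃ : a₃ ≤ a₂) (h₃ : 0 ≤ a₃)
    (f : ℝ → ℝ) (hf : ConvexOn ℝ (Set.Icc 0 a₁) f) :
    f (a₁ - a₂ + a₃) ≤ f a₁ - f a₂ + f a₃ := by
  have key := hf.add_le_add_of_add_eq (c := a₁ - a₂ + a₃) ⟨h₃, h₂₃.trans h₁₂⟩
    ⟨h₃.trans (h₂₃.trans h₁₂), le_rfl⟩ h₂₃ h₁₂ (by ring)
  linarith
end

section
/- Let m ≥ 1 be a natural number, let a_1 ≥ a_2 ≥ ... ≥ a_{2m} ≥ 0 be real numbers, and let f : ℝ → ℝ be convex on [0, a_1] and belong to the class W. Then ∑_{s=1}^{2m} (-1)^{s-1} f(a_s) ≥ f( ∑_{s=1}^{2m} (-1)^{s-1} a_s ). -/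
/-- Convexity pairing: if `0 ≤ x ≤ y ≤ z ≤ c` and `f` is convex on `[0, c]` then
`f y + f (z - y + x) ≤ f x + f z`. -/
lemma pair_ineq (f : ℝ → ℝ) {c x y z : ℝ} (hf : ConvexOn ℝ (Set.Icc 0 c) f)
    (hx : 0 ≤ x) (hxy : x ≤ y) (hyz : y ≤ z) (hzc : z ≤ c) :
    f y + f (z - y + x) ≤ f x + f z := by
  rcases eq_or_lt_of_le (hxy.trans hyz) with rfl | hxz
  · have hy : y = x := le_antisymm hyz hxy
    subst hy
    simp
  · have hne : z - x ≠ 0 := by linarith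
    set t : ℝ := (z - y) / (z - x) with ht
    have ht0 : 0 ≤ t := div_nonneg (by linarith) (by linarith)
    have ht1 : t ≤ 1 := by
      rw [div_le_one (by linarith)]; linarith
    have hxmem : x ∈ Set.Icc 0 c := ⟨hx, by linarith⟩
    have hzmem : z ∈ Set.Icc 0 c := ⟨by linarith, hzc⟩
    have h1 := hf.2 hxmem hzmem ht0 (by linarith : (0:ℝ) ≤ 1 - t) (by ring)
    have h2 := hf.2 hxmem hzmem (by linarith : (0:ℝ) ≤ 1 - t) ht0 (by ring)
    have e1 : t • x + (1 - t) • z = y := by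
      simp only [smul_eq_mul, ht]
      field_simp
      ring
    have e2 : (1 - t) • x + t • z = z - y + x := by
      simp only [smul_eq_mul, ht]
      field_simp
      ring
    rw [e1] at h1
    rw [e2] at h2
    simp only [smul_eq_mul] at h1 h2
    linarith

lemma stmt_15_aux (f : ℝ → ℝ) (hW : MemW f) :
    ∀ m : ℕ, 1 ≤ m → ∀ a : ℕ → ℝ,
    (∀ i, i + 1 < 2 * m → a (i + 1) ≤ a i) →
    0 ≤ a (2 * m - 1) →
    ConvexOn ℝ (Set.Icc 0 (a 0)) f →
    ∑ s ∈ Finset.range (2 * m), (-1 : ℝ) ^ s * f (a s) ≥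
      f (∑ s ∈ Finset.range (2 * m), (-1 : ℝ) ^ s * a s) := by
  intro m hm
  induction m, hm using Nat.le_induction with
  | base =>
    intro a hmono hlast hf
    have h01 : a 1 ≤ a 0 := hmono 0 (by norm_num)
    have h1 : (0:ℝ) ≤ a 1 := hlast
    have h := hW (a 0) (a 1) h1 h01
    simp only [Finset.sum_range_succ, Finset.sum_range_zero]
    norm_num
    have e : a 0 + -a 1 = a 0 - a 1 := by ring
    rw [e]
    linarith
  | succ m hm ih =>
    intro a hmono hlast hf
    -- overall antitonicity
    have hle : ∀ j, j < 2 * (m + 1) → ∀ i, i ≤ j → a j ≤ a i := by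
      intro j
      induction j with
      | zero =>
        intro _ i hi
        obtain rfl := Nat.le_zero.mp hi
        exact le_rfl
      | succ k ihk =>
        intro hk i hi
        rcases Nat.eq_or_lt_of_le hi with rfl | h
        · exact le_rfl
        · exact (hmono k hk).trans (ihk (by omega) i (by omega))
    obtain ⟨n, rfl⟩ : ∃ n, m = n + 1 := ⟨m - 1, by omega⟩
    -- shift lemma for alternating sums
    have shift : ∀ (G : ℕ → ℝ) (k : ℕ),
        ∑ s ∈ Finset.range (k + 2), (-1:ℝ) ^ s * G s
          = G 0 - G 1 + ∑ s ∈ Finset.range k, (-1:ℝ) ^ s * G (s + 2) := by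
      intro G k
      rw [Finset.sum_range_succ', Finset.sum_range_succ']
      have hc : ∀ s ∈ Finset.range k,
          ((-1:ℝ)) ^ (s + 1 + 1) * G (s + 1 + 1) = (-1:ℝ) ^ s * G (s + 2) := by
        intro s _
        have : s + 1 + 1 = s + 2 := rfl
        rw [this, pow_succ, pow_succ]
        ring
      rw [Finset.sum_congr rfl hc]
      norm_num
      ring
    set b : ℝ := a 0 - a 1 + a 2 with hb
    set a' : ℕ → ℝ := fun i => if i = 0 then b else a (i + 2) with ha'
    have h01 : a 1 ≤ a 0 := hmono 0 (by omega)
    have h12 : a 2 ≤ a 1 := hmono 1 (by omega)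
    have h23 : a 3 ≤ a 2 := hmono 2 (by omega)
    have hlast3 : (0:ℝ) ≤ a (2 * n + 3) := by
      have : 2 * (n + 1 + 1) - 1 = 2 * n + 3 := by omega
      rwa [this] at hlast
    have h2nn : (0:ℝ) ≤ a 2 := le_trans hlast3 (hle (2 * n + 3) (by omega) 2 (by omega))
    have hb2 : a 2 ≤ b := by rw [hb]; linarith
    have hb0 : b ≤ a 0 := by rw [hb]; linarith
    -- IH hypotheses for a'
    have hmono' : ∀ i, i + 1 < 2 * (n + 1) → a' (i + 1) ≤ a' i := by
      intro i hi
      rcases Nat.eq_zero_or_pos i with rfl | hpos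
      · simp only [ha']
        norm_num
        linarith
      · have h1ne : i + 1 ≠ 0 := by omega
        have hine : i ≠ 0 := by omega
        simp only [ha', if_neg h1ne, if_neg hine]
        exact hmono (i + 2) (by omega)
    have hlast' : 0 ≤ a' (2 * (n + 1) - 1) := by
      have e : 2 * (n + 1) - 1 = 2 * n + 1 := by omega
      rw [e]
      have : a' (2 * n + 1) = a (2 * n + 3) := by simp [ha']
      rw [this]
      exact hlast3
    have ha'0 : a' 0 = b := by simp [ha']
    have hf' : ConvexOn ℝ (Set.Icc 0 (a' 0)) f := by
      rw [ha'0]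
      exact hf.subset (Set.Icc_subset_Icc_right hb0) (convex_Icc 0 b)
    have hIH := ih a' hmono' hlast' hf'
    -- tail sums agree
    have htail : ∀ g : ℝ → ℝ,
        ∑ s ∈ Finset.range (2 * n), (-1:ℝ) ^ s * g (a' (s + 2))
          = ∑ s ∈ Finset.range (2 * n), (-1:ℝ) ^ s * g (a (s + 4)) := by
      intro g
      apply Finset.sum_congr rfl
      intro s _
      have h1 : s + 2 ≠ 0 := by omega
      have h2 : s + 2 + 2 = s + 4 := by omega
      simp only [ha', if_neg h1, h2]
    -- expand the big sum (over 2(n+2) = (2n+2)+2 terms, then again)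
    have expand : ∀ g : ℝ → ℝ,
        ∑ s ∈ Finset.range (2 * (n + 1 + 1)), (-1:ℝ) ^ s * g (a s)
          = g (a 0) - g (a 1) + g (a 2) - g (a 3)
            + ∑ s ∈ Finset.range (2 * n), (-1:ℝ) ^ s * g (a (s + 4)) := by
      intro g
      have e1 : 2 * (n + 1 + 1) = (2 * n + 2) + 2 := by ring
      rw [e1, shift (fun s => g (a s)) (2 * n + 2),
        shift (fun s => g (a (s + 2))) (2 * n)]
      have e2 : ∀ s ∈ Finset.range (2 * n),
          ((-1:ℝ)) ^ s * g (a (s + 2 + 2)) = (-1:ℝ) ^ s * g (a (s + 4)) := by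
        intro s _
        have : s + 2 + 2 = s + 4 := by omega
        rw [this]
      rw [Finset.sum_congr rfl e2]
      ring
    have expand' : ∀ g : ℝ → ℝ,
        ∑ s ∈ Finset.range (2 * (n + 1)), (-1:ℝ) ^ s * g (a' s)
          = g b - g (a 3)
            + ∑ s ∈ Finset.range (2 * n), (-1:ℝ) ^ s * g (a (s + 4)) := by
      intro g
      have e1 : 2 * (n + 1) = 2 * n + 2 := by ring
      rw [e1, shift (fun s => g (a' s)) (2 * n), htail g]
      have e0 : a' 0 = b := ha'0
      have e3 : a' 1 = a 3 := by simp [ha']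
      rw [e0, e3]
    -- the alternating sums agree
    have hsame : ∑ s ∈ Finset.range (2 * (n + 1 + 1)), (-1:ℝ) ^ s * a s
        = ∑ s ∈ Finset.range (2 * (n + 1)), (-1:ℝ) ^ s * a' s := by
      have E1 := expand (fun x => x)
      have E2 := expand' (fun x => x)
      rw [E1, E2, hb]
      try ring
    -- pairing inequality : f (a 1) + f b ≤ f (a 2) + f (a 0)
    have hpair : f (a 1) + f b ≤ f (a 2) + f (a 0) := by
      have := pair_ineq f hf h2nn h12 h01 le_rfl
      have hbe : a 0 - a 1 + a 2 = b := by rw [hb]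
      rwa [hbe] at this
    rw [expand f, hsame]
    rw [expand' f] at hIH
    linarith

/-- Let `m ≥ 1`, let `a 0 ≥ a 1 ≥ ⋯ ≥ a (2m-1) ≥ 0` (the terms
`a_1 ≥ ⋯ ≥ a_{2m} ≥ 0`, indexed from `0`), and let `f : ℝ → ℝ` be convex on `[0, a 0]`
and belong to the class `W`. Then
`∑_{s=0}^{2m-1} (-1)^s f (a s) ≥ f (∑_{s=0}^{2m-1} (-1)^s a s)`. -/
theorem stmt_15 (m : ℕ) (hm : 1 ≤ m) (a : ℕ → ℝ) (f : ℝ → ℝ)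
    (hmono : ∀ i, i + 1 < 2 * m → a (i + 1) ≤ a i)
    (hlast : 0 ≤ a (2 * m - 1))
    (hf : ConvexOn ℝ (Set.Icc 0 (a 0)) f) (hW : MemW f) :
    ∑ s ∈ Finset.range (2 * m), (-1 : ℝ) ^ s * f (a s) ≥
      f (∑ s ∈ Finset.range (2 * m), (-1 : ℝ) ^ s * a s) := by
  exact stmt_15_aux f hW m hm a hmono hlast hf
end

section
/- (Generalized Weinberger inequality) Let m ≥ 1 be a natural number, let a_1 ≥ a_2 ≥ ... ≥ a_m ≥ 0 be real numbers, and let f : ℝ → ℝ be convex on [0, a_1] with f(0) ≤ 0. Then f( ∑_{s=1}^{m} (-1)^{s-1} a_s ) ≤ ∑_{s=1}^{m} (-1)^{s-1} f(a_s). -/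
private lemma sum_shift2 (n : ℕ) (g : ℕ → ℝ) :
    ∑ s ∈ Finset.range (n+2), (-1:ℝ)^s * g s
      = g 0 - g 1 + ∑ s ∈ Finset.range n, (-1:ℝ)^s * g (s+2) := by
  rw [Finset.sum_range_succ' _ (n+1), Finset.sum_range_succ']
  have h : ∀ i : ℕ, ((-1:ℝ))^(i+1+1) = (-1)^i := by intro i; ring
  simp only [h]
  ring

private lemma wright {S : Set ℝ} {f : ℝ → ℝ} (hf : ConvexOn ℝ S f) {x y h : ℝ}
    (hx : x ∈ S) (hyh : y + h ∈ S) (hxy : x ≤ y) (hh : 0 ≤ h) :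
    f (x + h) + f y ≤ f x + f (y + h) := by
  rcases eq_or_lt_of_le (by linarith : x ≤ y + h) with heq | hlt
  · have hy : y = x := by linarith
    have h0 : h = 0 := by linarith
    rw [hy, h0, add_zero]
  · set d := y + h - x with hd
    have hd0 : 0 < d := by simp only [hd]; linarith
    set t := h / d with ht
    have ht0 : 0 ≤ t := div_nonneg hh hd0.le
    have ht1 : t ≤ 1 := (div_le_one hd0).2 (by linarith)
    have htd : t * d = h := div_mul_cancel₀ h hd0.ne'
    have h1 := hf.2 hx hyh (by linarith : (0:ℝ) ≤ 1 - t) ht0 (by ring)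
    have h2 := hf.2 hx hyh ht0 (by linarith : (0:ℝ) ≤ 1 - t) (by ring)
    have e1 : (1 - t) • x + t • (y + h) = x + h := by
      simp only [smul_eq_mul]; nlinarith [htd]
    have e2 : t • x + (1 - t) • (y + h) = y := by
      simp only [smul_eq_mul]; nlinarith [htd]
    rw [e1] at h1
    rw [e2] at h2
    simp only [smul_eq_mul] at h1 h2
    nlinarith

private lemma alt_bounds : ∀ m : ℕ, ∀ a : ℕ → ℝ,
    (∀ i, i + 1 < m → a (i + 1) ≤ a i) → (m ≠ 0 → 0 ≤ a (m - 1)) →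
    0 ≤ ∑ s ∈ Finset.range m, (-1:ℝ)^s * a s ∧
      (m ≠ 0 → ∑ s ∈ Finset.range m, (-1:ℝ)^s * a s ≤ a 0)
  | 0, a, _, _ => by simp
  | 1, a, _, hlast => by
      simp only [Finset.sum_range_one, pow_zero, one_mul]
      exact ⟨hlast one_ne_zero, fun _ => le_refl _⟩
  | (n+2), a, hmono, hlast => by
      obtain ⟨h1, h2⟩ := alt_bounds n (fun s => a (s+2))
        (fun i hi => hmono (i+2) (by omega))
        (fun hn => by
          have := hlast (by omega)
          have he : n + 2 - 1 = n - 1 + 2 := by omega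
          rw [he] at this; exact this)
      rw [sum_shift2]
      have ha10 : a 1 ≤ a 0 := hmono 0 (by omega)
      have hT1 : ∑ s ∈ Finset.range n, (-1:ℝ)^s * a (s+2) ≤ a 1 := by
        rcases Nat.eq_zero_or_pos n with h | h
        · subst h; simpa using hlast (by omega)
        · refine le_trans (h2 (by omega)) ?_
          simpa using hmono 1 (by omega)
      exact ⟨by linarith, fun _ => by linarith⟩

private lemma key : ∀ m : ℕ, ∀ a : ℕ → ℝ, ∀ A : ℝ, ∀ f : ℝ → ℝ,
    (∀ i, i + 1 < m → a (i + 1) ≤ a i) → (m ≠ 0 → 0 ≤ a (m - 1)) →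
    (m ≠ 0 → a 0 ≤ A) → ConvexOn ℝ (Set.Icc 0 A) f → f 0 ≤ 0 →
    f (∑ s ∈ Finset.range m, (-1:ℝ)^s * a s) ≤
      ∑ s ∈ Finset.range m, (-1:ℝ)^s * f (a s)
  | 0, a, A, f, _, _, _, _, hf0 => by simpa using hf0
  | 1, a, A, f, _, _, _, _, _ => by simp
  | (n+2), a, A, f, hmono, hlast, hA, hf, hf0 => by
      set T := ∑ s ∈ Finset.range n, (-1:ℝ)^s * a (s+2) with hT
      have hmono' : ∀ i, i + 1 < n → a (i+1+2) ≤ a (i+2) :=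
        fun i hi => hmono (i+2) (by omega)
      have hlast' : n ≠ 0 → 0 ≤ a (n - 1 + 2) := fun hn => by
        have := hlast (by omega)
        have he : n + 2 - 1 = n - 1 + 2 := by omega
        rwa [he] at this
      obtain ⟨hT0, hT2⟩ := alt_bounds n (fun s => a (s+2)) hmono' hlast'
      have ha10 : a 1 ≤ a 0 := hmono 0 (by omega)
      have ha0A : a 0 ≤ A := hA (by omega)
      have hTa1 : T ≤ a 1 := by
        rcases Nat.eq_zero_or_pos n with h | h
        · subst h
          have hTe : T = 0 := by simp [hT]
          rw [hTe]
          simpa using hlast (by omega)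
        · refine le_trans (hT2 (by omega)) ?_
          simpa using hmono 1 (by omega)
      have ha10' : 0 ≤ a 1 := le_trans hT0 hTa1
      -- induction hypothesis
      have ih := key n (fun s => a (s+2)) A f hmono' hlast'
        (fun hn => by
          show a 2 ≤ A
          have h4 : a 2 ≤ a 1 := by simpa using hmono 1 (by omega)
          linarith)
        hf hf0
      -- wright inequality: x = T, y = a 1, h = a 0 - a 1
      have hw := wright hf (x := T) (y := a 1) (h := a 0 - a 1)
        (Set.mem_Icc.2 ⟨hT0, by linarith⟩)
        (by rw [show a 1 + (a 0 - a 1) = a 0 by ring]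
            exact Set.mem_Icc.2 ⟨by linarith, ha0A⟩)
        hTa1 (by linarith)
      rw [show a 1 + (a 0 - a 1) = a 0 by ring] at hw
      rw [sum_shift2 n a, sum_shift2 n (fun s => f (a s))]
      have : f (a 0 - a 1 + T) = f (T + (a 0 - a 1)) := by ring_nf
      rw [this]
      linarith

/-- Generalized Weinberger inequality: Let `m ≥ 1`, let
`a 0 ≥ a 1 ≥ ⋯ ≥ a (m-1) ≥ 0` (the terms `a_1 ≥ ⋯ ≥ a_m ≥ 0`, indexed from `0`),
and let `f : ℝ → ℝ` be convex on `[0, a 0]` with `f 0 ≤ 0`. Then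
`f (∑_{s=0}^{m-1} (-1)^s a s) ≤ ∑_{s=0}^{m-1} (-1)^s f (a s)`. -/
theorem stmt_17 (m : ℕ) (hm : 1 ≤ m) (a : ℕ → ℝ) (f : ℝ → ℝ)
    (hmono : ∀ i, i + 1 < m → a (i + 1) ≤ a i)
    (hlast : 0 ≤ a (m - 1))
    (hf : ConvexOn ℝ (Set.Icc 0 (a 0)) f) (hf0 : f 0 ≤ 0) :
    f (∑ s ∈ Finset.range m, (-1 : ℝ) ^ s * a s) ≤
      ∑ s ∈ Finset.range m, (-1 : ℝ) ^ s * f (a s) := by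
  exact key m a (a 0) f hmono (fun _ => hlast) (fun _ => le_refl _) hf hf0
end
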